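/- With phantoms as in the mixed median: a pair (x,y) ∈ Ω²_C can be the outcome of the mixed median for some peak vector p ∈ Ω^a if and only if at least one phantom equals (x,y). -/

import Mathlib

/-- The ambient linearly ordered set `Ω ∪ Ω²_C`: singles `x` are encoded as
`toLex (x, x)` and contiguous pairs `(x, y)` as `toLex (x, y)`; the lexicographic
order on `ℝ × ℝ` then restricts to the order `≤*`. -/
abbrev V : Type := Lex (ℝ × ℝ)

/-- Embedding of a single alternative into `Ω ∪ Ω²_C`. -/
def emb (x : ℝ) : V := toLex (x, x)

/-- A pair of contiguous alternatives as an element of `Ω ∪ Ω²_C`. -/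
def pairV (x y : ℝ) : V := toLex (x, y)

/-- `(x, y)` is a pair of contiguous elements of `Ω`, i.e. `(x, y) ∈ Ω²_C`. -/
def IsContigPair (Ω : Finset ℝ) (x y : ℝ) : Prop :=
  x ∈ Ω ∧ y ∈ Ω ∧ x < y ∧ ∀ z ∈ Ω, ¬(x < z ∧ z < y)

/-- `v` belongs to `Ω ∪ Ω²_C`. -/
def InDom (Ω : Finset ℝ) (v : V) : Prop :=
  (∃ z ∈ Ω, v = emb z) ∨ ∃ x y : ℝ, IsContigPair Ω x y ∧ v = pairV x y

/-- `m` is a median of the list `l` in a linear order. -/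
def IsMedian {α : Type*} [LinearOrder α] (l : List α) (m : α) : Prop :=
  m ∈ l ∧ (l.length + 1) / 2 ≤ l.countP (fun b => decide (b ≤ m)) ∧
    (l.length + 1) / 2 ≤ l.countP (fun b => decide (m ≤ b))

/-! A median is an entry of the list and the peaks are singles, so a pair outcome must be a
phantom. Conversely, if some phantom equals `m = (x, y)` and `k` phantoms lie strictly above `m`
(so `k ≤ a`), put `k` peaks at `x <* m` and the other `a - k` at `y >* m`: then exactly `a + 1` of
the `2a + 1` entries are `≤* m`, and at least `a + 1` are `≥* m`. -/

lemma emb_lt_pairV {x y : ℝ} (h : x < y) : emb x < pairV x y :=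
  Prod.Lex.lt_iff.mpr (Or.inr ⟨rfl, h⟩)

lemma pairV_lt_emb {x y : ℝ} (h : x < y) : pairV x y < emb y :=
  Prod.Lex.lt_iff.mpr (Or.inl h)

lemma emb_ne_pairV {x y : ℝ} (h : x < y) (z : ℝ) : emb z ≠ pairV x y := by
  intro hz
  obtain ⟨rfl, rfl⟩ := Prod.ext_iff.mp (toLex.injective hz)
  exact lt_irrefl _ h

lemma List.ofFn_ite_lt {β : Type*} {n k : ℕ} (hk : k ≤ n) (b c : β) :
    List.ofFn (fun i : Fin n => if (i : ℕ) < k then b else c) =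
      List.replicate k b ++ List.replicate (n - k) c := by
  refine List.ext_getElem (by simp; omega) fun i h₁ h₂ => ?_
  simp only [List.getElem_ofFn, List.getElem_append, List.length_replicate, List.getElem_replicate]
  split_ifs <;> rfl

section Median

variable {α : Type*} [LinearOrder α]

lemma countP_lt_add_one_le_countP_le {l : List α} {m : α} (hm : m ∈ l) :
    l.countP (fun b => m < b) + 1 ≤ l.countP (fun b => m ≤ b) := by
  induction l with
  | nil => simp at hm
  | cons b l ih =>
    rw [List.countP_cons, List.countP_cons]
    rcases List.mem_cons.mp hm with rfl | hm
    · have : l.countP (fun b => m < b) ≤ l.countP (fun b => m ≤ b) :=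
        List.countP_mono_left fun b _ h => by simp only [decide_eq_true_eq] at h ⊢; exact h.le
      simp; omega
    · have := ih hm
      by_cases h : m < b
      · simp [h, h.le]; omega
      · simp [h]; omega

theorem isMedian_replicate_append {l : List α} {m lo hi : α} {n k : ℕ} (hm : m ∈ l)
    (hlo : lo < m) (hhi : m < hi) (hl : l.length = n + 1) (hk : l.countP (fun b => m < b) = k) :
    IsMedian (List.replicate k lo ++ List.replicate (n - k) hi ++ l) m := by
  have hle := countP_lt_add_one_le_countP_le hm
  have hsplit : l.length = l.countP (fun b => m < b) + l.countP (fun b => b ≤ m) := by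
    simpa using List.length_eq_countP_add_countP (fun b => m < b) (l := l)
  have hle_len := List.countP_le_length (p := fun b => m ≤ b) (l := l)
  refine ⟨List.mem_append_right _ hm, ?_, ?_⟩
  · simp [List.countP_append, List.countP_replicate, hlo.le, hhi.not_ge]
    omega
  · simp [List.countP_append, List.countP_replicate, hlo.not_ge, hhi.le]
    omega

end Median

theorem stmt10_general (Ω : Finset ℝ) (a : ℕ) (γ : Fin (a + 1) → V)
    (x y : ℝ) (hxy : IsContigPair Ω x y) :
    (∃ p : Fin a → ℝ, (∀ i, p i ∈ Ω) ∧
        IsMedian ((List.ofFn fun i => emb (p i)) ++ List.ofFn γ) (pairV x y)) ↔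
      ∃ j, γ j = pairV x y := by
  obtain ⟨hx, hy, hlt, -⟩ := hxy
  constructor
  · rintro ⟨p, -, hmem, -⟩
    rcases List.mem_append.mp hmem with hpeak | hphantom
    · obtain ⟨i, hi⟩ := List.mem_ofFn.mp hpeak
      exact absurd hi (emb_ne_pairV hlt _)
    · exact List.mem_ofFn.mp hphantom
  · rintro ⟨j, hj⟩
    have hmem : pairV x y ∈ List.ofFn γ := List.mem_ofFn.mpr ⟨j, hj⟩
    set k := (List.ofFn γ).countP (fun v => pairV x y < v)
    have hk : k ≤ a := by
      have := (countP_lt_add_one_le_countP_le hmem).trans List.countP_le_length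
      simp only [List.length_ofFn] at this
      omega
    refine ⟨fun i => if (i : ℕ) < k then x else y, fun i => by dsimp only; split_ifs <;> assumption, ?_⟩
    simp only [apply_ite emb]
    rw [List.ofFn_ite_lt hk]
    exact isMedian_replicate_append hmem (emb_lt_pairV hlt) (pairV_lt_emb hlt) List.length_ofFn rfl

/-- A pair `(x, y) ∈ Ω²_C` is the outcome of the mixed median for some peak
vector in `Ω` if and only if at least one phantom equals `(x, y)`. -/
theorem stmt10 (Ω : Finset ℝ) (a : ℕ) (γ : Fin (a + 1) → V)
    (hdom : ∀ j, InDom Ω (γ j))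
    (x y : ℝ) (hxy : IsContigPair Ω x y) :
    (∃ p : Fin a → ℝ, (∀ i, p i ∈ Ω) ∧
        IsMedian ((List.ofFn fun i => emb (p i)) ++ List.ofFn γ) (pairV x y)) ↔
      ∃ j, γ j = pairV x y :=
  stmt10_general Ω a γ x y hxy
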